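/- arXiv:2102.02450 — 2 statements merged into one kernel-verified Lean document; each statement's English description precedes it below -/
import Mathlib

section
/- Let γ > 1 satisfy e^{2/γ²} − 1 + e^{2(1−γ²)/γ²}/(γ² − 1) ≤ 1. If a random variable X satisfies ‖X‖_p ≤ C₁√p + C₂ p^{1/θ} for all p ≥ 2 (with C₁, C₂ > 0, θ > 0), then ‖X‖_{Ψ_{θ,K}} ≤ γ e C₁, where K = γ^{2/θ} C₂ / (γ C₁). -/
/-!
Put `φ s = √s + K s^{1/θ}`, so that `Ψ (φ s) = e^s - 1`, and `η = γ e C₁`. By the layer-cake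
formula `E Ψ(|X|/η) = ∫₀^∞ P(Ψ(|X|/η) > t) dt`. For `t > t₀ = e^{2/γ²} - 1` take
`s = log (t + 1)` and `p = γ² s ≥ 2`: the choice of `K` turns the moment bound into
`‖X‖_p ≤ γ C₁ φ s = η φ s / e`, and `Ψ(|X|/η) > t` forces `|X| ≥ η φ s`, so Markov's inequality
gives `P(Ψ(|X|/η) > t) ≤ e^{-p} = (t + 1)^{-γ²}`. Bounding the probability by `1` on `(0, t₀]`
and integrating the tail bound yields `E Ψ(|X|/η) ≤ t₀ + e^{2(1-γ²)/γ²}/(γ² - 1) ≤ 1`.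
-/

open MeasureTheory Real

/-- The Generalized Bernstein–Orlicz norm associated with a function `Ψ`:
`‖X‖_Ψ = inf { η > 0 : E[Ψ(|X|/η)] ≤ 1 }`. -/
noncomputable def gboNorm {Ω : Type*} [MeasurableSpace Ω] (μ : Measure Ω)
    (Ψ : ℝ → ℝ) (X : Ω → ℝ) : ℝ :=
  sInf {η : ℝ | 0 < η ∧ ∫ ω, Ψ (|X ω| / η) ∂μ ≤ 1}

open Set Filter Topology
open scoped Nat

lemma rpow_le_factorial_ceil_mul_exp {a u : ℝ} (ha : 0 ≤ a) (hu : 0 ≤ u) :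
    u ^ a ≤ (⌈a⌉₊)! * exp u := by
  have hfac : (1 : ℝ) ≤ (⌈a⌉₊)! := mod_cast Nat.one_le_iff_ne_zero.mpr (Nat.factorial_ne_zero _)
  rcases le_or_gt u 1 with hu1 | hu1
  · calc u ^ a ≤ 1 := rpow_le_one hu hu1 ha
      _ ≤ (⌈a⌉₊)! * exp u := one_le_mul_of_one_le_of_one_le hfac (one_le_exp hu)
  · calc u ^ a ≤ u ^ (⌈a⌉₊ : ℝ) := rpow_le_rpow_of_exponent_le hu1.le (Nat.le_ceil a)
      _ = u ^ ⌈a⌉₊ := rpow_natCast u _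
      _ ≤ (⌈a⌉₊)! * exp u := by
        rw [← div_le_iff₀' (by positivity)]
        exact pow_div_factorial_le_exp _ hu _

lemma rpow_le_mul_exp_div {a p u : ℝ} (ha : 0 ≤ a) (hp : 0 < p) (hu : 0 ≤ u) :
    u ^ a ≤ p ^ a * (⌈a⌉₊)! * exp (u / p) := by
  calc u ^ a = p ^ a * (u / p) ^ a := by
        rw [← mul_rpow hp.le (by positivity), mul_div_cancel₀ _ hp.ne']
    _ ≤ p ^ a * ((⌈a⌉₊)! * exp (u / p)) := by
        gcongr; exact rpow_le_factorial_ceil_mul_exp ha (by positivity)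
    _ = p ^ a * (⌈a⌉₊)! * exp (u / p) := by ring

lemma integral_Ioi_add_rpow_of_lt {a c m : ℝ} (ha : a < -1) (hc : -m < c) :
    ∫ x in Ioi c, (x + m) ^ a = -(c + m) ^ (a + 1) / (a + 1) := by
  have hd : ∀ x ∈ Ici c, HasDerivAt (fun t ↦ (t + m) ^ (a + 1) / (a + 1)) ((x + m) ^ a) x := by
    intro x hx
    have hxm : x + m ≠ 0 := by linarith [mem_Ici.mp hx]
    refine ((((hasDerivAt_id' x).add_const m).rpow_const (p := a + 1)
      (Or.inl hxm)).div_const (a + 1)).congr_deriv ?_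
    field_simp [show a + 1 ≠ 0 by linarith]
    simp
  have ht : Tendsto (fun t ↦ (t + m) ^ (a + 1) / (a + 1)) atTop (𝓝 (0 / (a + 1))) := by
    rw [← neg_neg (a + 1)]
    exact ((tendsto_rpow_neg_atTop (by linarith)).comp
      (tendsto_atTop_add_const_right _ m tendsto_id)).div_const _
  rw [integral_Ioi_of_hasDerivAt_of_tendsto' hd (integrableOn_add_rpow_Ioi_of_lt ha hc) ht]
  ring

/-- `gboGauge θ L s = Ψ_{θ,L}⁻¹ (e^s - 1)`. -/
noncomputable def gboGauge (θ L s : ℝ) : ℝ := √s + L * s ^ (1 / θ)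

section Gauge

variable {θ L s : ℝ}

lemma gboGauge_zero (hθ : θ ≠ 0) : gboGauge θ L 0 = 0 := by
  simp [gboGauge, zero_rpow (inv_ne_zero hθ)]

lemma gboGauge_pos (hL : 0 ≤ L) (hs : 0 < s) : 0 < gboGauge θ L s :=
  add_pos_of_pos_of_nonneg (sqrt_pos.mpr hs) (by positivity)

lemma exists_gboGauge_le_mul_exp_div (hθ : 0 < θ) (hL : 0 ≤ L) {p : ℝ} (hp : 0 < p) :
    ∃ D > 0, ∀ s, 0 ≤ s → gboGauge θ L s ≤ D * exp (s / p) := by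
  refine ⟨p ^ (1 / 2 : ℝ) * (⌈(1 / 2 : ℝ)⌉₊)! + L * (p ^ (1 / θ) * (⌈1 / θ⌉₊)!),
    by positivity, fun s hs ↦ ?_⟩
  have hsqrt := rpow_le_mul_exp_div (by norm_num : (0 : ℝ) ≤ 1 / 2) hp hs
  have hpow := rpow_le_mul_exp_div (by positivity : 0 ≤ 1 / θ) hp hs
  rw [gboGauge, sqrt_eq_rpow, add_mul, mul_assoc L]
  gcongr

lemma mul_sqrt_add_mul_rpow_eq_gboGauge {γ C₁ C₂ : ℝ} (hγ : 0 < γ) (hC₁ : 0 < C₁) (hs : 0 ≤ s) :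
    C₁ * √(γ ^ 2 * s) + C₂ * (γ ^ 2 * s) ^ (1 / θ) =
      γ * C₁ * gboGauge θ (γ ^ (2 / θ) * C₂ / (γ * C₁)) s := by
  have hsqrt : √(γ ^ 2 * s) = γ * √s := by rw [sqrt_mul (by positivity), sqrt_sq hγ.le]
  have hpow : (γ ^ 2 * s) ^ (1 / θ) = γ ^ (2 / θ) * s ^ (1 / θ) := by
    rw [mul_rpow (by positivity) hs, ← rpow_natCast, ← rpow_mul hγ.le]
    norm_num [div_eq_mul_one_div 2 θ]
  rw [hsqrt, hpow, gboGauge]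
  field_simp

end Gauge

lemma gboNorm_le_of_integral_le_one {Ω : Type*} [MeasurableSpace Ω] {μ : Measure Ω}
    {Ψ : ℝ → ℝ} {X : Ω → ℝ} {η : ℝ} (hη : 0 < η) (h : ∫ ω, Ψ (|X ω| / η) ∂μ ≤ 1) :
    gboNorm μ Ψ X ≤ η :=
  csInf_le ⟨0, fun _ hx ↦ hx.1.le⟩ ⟨hη, h⟩

section OrliczFunction

variable {θ L : ℝ} {Ψ : ℝ → ℝ}

lemma apply_gboGauge_eq (hΨ : ∀ t, 0 ≤ t → Ψ (gboGauge θ L (log (t + 1))) = t) {s : ℝ}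
    (hs : 0 ≤ s) : Ψ (gboGauge θ L s) = exp s - 1 := by
  simpa using hΨ (exp s - 1) (by linarith [one_le_exp hs])

lemma apply_nonneg_of_gboGauge (hθ : θ ≠ 0) (hmono : Monotone Ψ)
    (hΨ : ∀ t, 0 ≤ t → Ψ (gboGauge θ L (log (t + 1))) = t) {y : ℝ} (hy : 0 ≤ y) : 0 ≤ Ψ y := by
  have h0 := apply_gboGauge_eq hΨ le_rfl
  rw [gboGauge_zero hθ, exp_zero, sub_self] at h0
  exact h0 ▸ hmono hy

lemma exists_rpow_le_mul_one_add_apply (hθ : 0 < θ) (hL : 0 ≤ L) (hmono : Monotone Ψ)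
    (hΨ : ∀ t, 0 ≤ t → Ψ (gboGauge θ L (log (t + 1))) = t) {p : ℝ} (hp : 0 < p) :
    ∃ C, ∀ y, 0 ≤ y → y ^ p ≤ C * (1 + Ψ y) := by
  obtain ⟨D, hD, hgauge⟩ := exists_gboGauge_le_mul_exp_div hθ hL hp
  refine ⟨D ^ p, fun y hy ↦ ?_⟩
  have hΨy := apply_nonneg_of_gboGauge hθ.ne' hmono hΨ hy
  rcases le_or_gt y D with hyD | hDy
  · calc y ^ p ≤ D ^ p := rpow_le_rpow hy hyD hp.le
      _ ≤ D ^ p * (1 + Ψ y) := le_mul_of_one_le_right (by positivity) (by linarith)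
  have hyD : 0 < y / D := div_pos (hD.trans hDy) hD
  -- `y = D e^{s/p}`, hence `gboGauge θ L s ≤ y` and `Ψ y ≥ e^s - 1 = (y / D)^p - 1`.
  set s := p * log (y / D)
  have hs : 0 < s := mul_pos hp (log_pos ((one_lt_div hD).mpr hDy))
  have hexp : exp s = (y / D) ^ p := by rw [rpow_def_of_pos hyD, mul_comm]
  have hgs : gboGauge θ L s ≤ y := by
    have := hgauge s hs.le
    rwa [mul_div_cancel_left₀ _ hp.ne', exp_log hyD, mul_div_cancel₀ _ hD.ne'] at this
  have hΨs : (y / D) ^ p - 1 ≤ Ψ y := by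
    rw [← hexp, ← apply_gboGauge_eq hΨ hs.le]
    exact hmono hgs
  calc y ^ p = D ^ p * (y / D) ^ p := by
        rw [div_rpow hy hD.le, mul_div_cancel₀ _ (by positivity)]
    _ ≤ D ^ p * (1 + Ψ y) := by gcongr; linarith

lemma integrable_abs_rpow_of_integrable_apply {Ω : Type*} [MeasurableSpace Ω] {μ : Measure Ω}
    [IsFiniteMeasure μ] (hθ : 0 < θ) (hL : 0 ≤ L) (hmono : Monotone Ψ)
    (hΨ : ∀ t, 0 ≤ t → Ψ (gboGauge θ L (log (t + 1))) = t) {X : Ω → ℝ} (hX : Measurable X)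
    {η : ℝ} (hη : 0 < η) (hint : Integrable (fun ω ↦ Ψ (|X ω| / η)) μ) {p : ℝ} (hp : 0 < p) :
    Integrable (fun ω ↦ |X ω| ^ p) μ := by
  obtain ⟨C, hC⟩ := exists_rpow_le_mul_one_add_apply hθ hL hmono hΨ hp
  refine (((integrable_const 1).add hint).const_mul (η ^ p * C)).mono'
    (by fun_prop : Measurable fun ω ↦ |X ω| ^ p).aestronglyMeasurable (ae_of_all _ fun ω ↦ ?_)
  have hbound := hC (|X ω| / η) (by positivity)
  rw [div_rpow (abs_nonneg _) hη.le, div_le_iff₀' (by positivity)] at hbound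
  rw [norm_of_nonneg (by positivity), mul_assoc]
  exact hbound

end OrliczFunction

section Tail

variable {Ω : Type*} [MeasurableSpace Ω] {μ : Measure Ω}

lemma measureReal_abs_ge_le_of_moment_le {X : Ω → ℝ} {p u M : ℝ} (hp : 0 < p) (hu : 0 < u)
    (hint : Integrable (fun ω ↦ |X ω| ^ p) μ) (hM : (∫ ω, |X ω| ^ p ∂μ) ^ (1 / p) ≤ M) :
    μ.real {ω | u ≤ |X ω|} ≤ (M / u) ^ p := by
  have hI : 0 ≤ ∫ ω, |X ω| ^ p ∂μ := integral_nonneg fun ω ↦ by positivity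
  have hmarkov := mul_meas_ge_le_integral_of_nonneg (ae_of_all _ fun ω ↦ by positivity) hint (u ^ p)
  have hset : {ω | u ^ p ≤ |X ω| ^ p} = {ω | u ≤ |X ω|} := by
    ext ω; exact rpow_le_rpow_iff hu.le (abs_nonneg _) hp
  have hmoment : ∫ ω, |X ω| ^ p ∂μ ≤ M ^ p := by
    calc ∫ ω, |X ω| ^ p ∂μ = ((∫ ω, |X ω| ^ p ∂μ) ^ (1 / p)) ^ p := by
          rw [← rpow_mul hI, one_div_mul_cancel hp.ne', rpow_one]
      _ ≤ M ^ p := by gcongr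
  rw [hset] at hmarkov
  rw [div_rpow ((rpow_nonneg hI _).trans hM) hu.le, le_div_iff₀' (by positivity)]
  linarith

lemma integral_le_add_setIntegral_Ioi_of_measureReal_lt_le [IsProbabilityMeasure μ]
    {f : Ω → ℝ} (hf : Integrable f μ) (hf0 : 0 ≤ᵐ[μ] f) {t₀ : ℝ} (ht₀ : 0 ≤ t₀) {g : ℝ → ℝ}
    (hg : IntegrableOn g (Ioi t₀)) (htail : ∀ t, t₀ < t → μ.real {ω | t < f ω} ≤ g t) :
    ∫ ω, f ω ∂μ ≤ t₀ + ∫ t in Ioi t₀, g t := by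
  set h : ℝ → ℝ := fun t ↦ μ.real {ω | t < f ω}
  have hmeas : Measurable h :=
    Antitone.measurable fun a b hab ↦ measureReal_mono fun ω hω ↦ hab.trans_lt hω
  have hint₁ : IntegrableOn h (Ioc 0 t₀) :=
    Measure.integrableOn_of_bounded (M := 1) measure_Ioc_lt_top.ne hmeas.aestronglyMeasurable
      (ae_of_all _ fun t ↦ (norm_of_nonneg measureReal_nonneg).trans_le measureReal_le_one)
  have hint₂ : IntegrableOn h (Ioi t₀) :=
    hg.mono' hmeas.aestronglyMeasurable <| (ae_restrict_iff' measurableSet_Ioi).mpr <|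
      ae_of_all _ fun t ht ↦ (norm_of_nonneg measureReal_nonneg).trans_le (htail t ht)
  rw [hf.integral_eq_integral_meas_lt hf0, ← Ioc_union_Ioi_eq_Ioi ht₀,
    setIntegral_union (Ioc_disjoint_Ioi le_rfl) measurableSet_Ioi hint₁ hint₂]
  refine add_le_add ?_ (setIntegral_mono_on hint₂ hg measurableSet_Ioi htail)
  calc ∫ t in Ioc 0 t₀, h t ≤ ∫ t in Ioc 0 t₀, (1 : ℝ) :=
        setIntegral_mono_on hint₁ (integrableOn_const measure_Ioc_lt_top.ne) measurableSet_Ioc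
          fun t _ ↦ measureReal_le_one
    _ = t₀ := by simp [ht₀]

end Tail

lemma measureReal_lt_apply_le_add_one_rpow {Ω : Type*} [MeasurableSpace Ω] {μ : Measure Ω}
    [IsFiniteMeasure μ] {θ C₁ C₂ γ : ℝ} (hC₁ : 0 < C₁) (hC₂ : 0 ≤ C₂) (hγ : 0 < γ)
    {Ψ : ℝ → ℝ} (hmono : Monotone Ψ)
    (hΨ : ∀ t, 0 ≤ t → Ψ (gboGauge θ (γ ^ (2 / θ) * C₂ / (γ * C₁)) (log (t + 1))) = t)
    {X : Ω → ℝ} (hint : ∀ p : ℝ, 2 ≤ p → Integrable (fun ω ↦ |X ω| ^ p) μ)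
    (hmom : ∀ p : ℝ, 2 ≤ p →
      (∫ ω, |X ω| ^ p ∂μ) ^ (1 / p) ≤ C₁ * √p + C₂ * p ^ (1 / θ))
    {t : ℝ} (ht : exp (2 / γ ^ 2) ≤ t + 1) :
    μ.real {ω | t < Ψ (|X ω| / (γ * exp 1 * C₁))} ≤ (t + 1) ^ (-γ ^ 2) := by
  set K := γ ^ (2 / θ) * C₂ / (γ * C₁)
  set η := γ * exp 1 * C₁
  have hη : 0 < η := by positivity
  have ht₁ : 0 < t + 1 := (exp_pos _).trans_le ht
  set s := log (t + 1)
  have hs : 2 / γ ^ 2 ≤ s := by rwa [← exp_le_exp, exp_log ht₁]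
  have hs₀ : 0 < s := (by positivity : (0 : ℝ) < 2 / γ ^ 2).trans_le hs
  set p := γ ^ 2 * s
  have hp : 2 ≤ p := by rwa [div_le_iff₀' (by positivity)] at hs
  have hgauge := gboGauge_pos (θ := θ) (by positivity : 0 ≤ K) hs₀
  have hsub : {ω | t < Ψ (|X ω| / η)} ⊆ {ω | η * gboGauge θ K s ≤ |X ω|} := by
    refine fun ω (hω : t < Ψ (|X ω| / η)) ↦
      (le_of_not_gt fun hlt ↦ hω.not_ge ?_ : η * gboGauge θ K s ≤ |X ω|)
    have := hmono ((div_le_iff₀' hη).mpr hlt.le)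
    rwa [apply_gboGauge_eq hΨ hs₀.le, exp_log ht₁, add_sub_cancel_right] at this
  have hM : (∫ ω, |X ω| ^ p ∂μ) ^ (1 / p) ≤ γ * C₁ * gboGauge θ K s :=
    (hmom p hp).trans_eq (mul_sqrt_add_mul_rpow_eq_gboGauge hγ hC₁ hs₀.le)
  calc μ.real {ω | t < Ψ (|X ω| / η)} ≤ μ.real {ω | η * gboGauge θ K s ≤ |X ω|} :=
        measureReal_mono hsub
    _ ≤ (γ * C₁ * gboGauge θ K s / (η * gboGauge θ K s)) ^ p :=
        measureReal_abs_ge_le_of_moment_le (by linarith) (by positivity) (hint p hp) hM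
    _ = (t + 1) ^ (-γ ^ 2) := by
        have : γ * C₁ * gboGauge θ K s / (η * gboGauge θ K s) = exp (-1) := by
          rw [exp_neg]; field_simp; simp only [η]; ring
        rw [this, ← exp_mul, rpow_def_of_pos ht₁]
        simp only [p, s]; ring_nf

/-- Sharper GBO-norm bound: if `‖X‖_p ≤ C₁√p + C₂ p^{1/θ}` for all `p ≥ 2`, and
`γ > 1` satisfies `e^{2/γ²} − 1 + e^{2(1−γ²)/γ²}/(γ²−1) ≤ 1`, then
`‖X‖_{Ψ_{θ,K}} ≤ γ e C₁` with `K = γ^{2/θ} C₂ / (γ C₁)`.  Here `ΨK` is the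
inverse of `t ↦ √(log(t+1)) + K (log(t+1))^{1/θ}`. -/
theorem gbo_norm_bound {Ω : Type*} [MeasurableSpace Ω]
    (μ : Measure Ω) [IsProbabilityMeasure μ]
    (θ : ℝ) (hθ : 0 < θ) (X : Ω → ℝ) (hX : Measurable X)
    (C₁ C₂ : ℝ) (hC₁ : 0 < C₁) (hC₂ : 0 < C₂)
    (γ : ℝ) (hγ : 1 < γ)
    (hγineq : Real.exp (2 / γ ^ 2) - 1 +
      Real.exp (2 * (1 - γ ^ 2) / γ ^ 2) / (γ ^ 2 - 1) ≤ 1)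
    (ΨK : ℝ → ℝ) (hΨmono : Monotone ΨK)
    (hΨinv : ∀ t : ℝ, 0 ≤ t →
      ΨK (Real.sqrt (Real.log (t + 1)) +
        (γ ^ (2 / θ) * C₂ / (γ * C₁)) * (Real.log (t + 1)) ^ (1 / θ)) = t)
    (hmom : ∀ p : ℝ, 2 ≤ p →
      (∫ ω, |X ω| ^ p ∂μ) ^ (1 / p) ≤ C₁ * Real.sqrt p + C₂ * p ^ (1 / θ)) :
    gboNorm μ ΨK X ≤ γ * Real.exp 1 * C₁ := by
  have hγ₀ : 0 < γ := one_pos.trans hγ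
  have hK : 0 ≤ γ ^ (2 / θ) * C₂ / (γ * C₁) := by positivity
  refine gboNorm_le_of_integral_le_one (by positivity) ?_
  by_cases hInt : Integrable (fun ω ↦ ΨK (|X ω| / (γ * exp 1 * C₁))) μ
  swap
  · rw [integral_undef hInt]; exact zero_le_one
  -- `hmom` is void where `|X|^p` is not integrable; integrability comes from that of `Ψ(|X|/η)`.
  have hmomInt (p : ℝ) (hp : 2 ≤ p) : Integrable (fun ω ↦ |X ω| ^ p) μ :=
    integrable_abs_rpow_of_integrable_apply hθ hK hΨmono hΨinv hX (by positivity) hInt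
      (by linarith)
  have hexp : 1 ≤ exp (2 / γ ^ 2) := one_le_exp (by positivity)
  have hγ₂ : -γ ^ 2 < -1 := by nlinarith
  calc ∫ ω, ΨK (|X ω| / (γ * exp 1 * C₁)) ∂μ
      ≤ exp (2 / γ ^ 2) - 1 + ∫ t in Ioi (exp (2 / γ ^ 2) - 1), (t + 1) ^ (-γ ^ 2) :=
        integral_le_add_setIntegral_Ioi_of_measureReal_lt_le hInt
          (ae_of_all _ fun ω ↦ apply_nonneg_of_gboGauge hθ.ne' hΨmono hΨinv (by positivity))
          (by linarith) (integrableOn_add_rpow_Ioi_of_lt hγ₂ (by linarith)) fun t ht ↦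
          measureReal_lt_apply_le_add_one_rpow hC₁ hC₂.le hγ₀ hΨmono hΨinv hmomInt hmom
            (by linarith)
    _ = exp (2 / γ ^ 2) - 1 + exp (2 * (1 - γ ^ 2) / γ ^ 2) / (γ ^ 2 - 1) := by
        rw [integral_Ioi_add_rpow_of_lt hγ₂ (by linarith), sub_add_cancel, ← exp_mul,
          show -γ ^ 2 + 1 = -(γ ^ 2 - 1) by ring, neg_div_neg_eq]
        ring_nf
    _ ≤ 1 := hγineq
end

section
/- A function φ : ℝ → ℝ can satisfy the two-sided log-truncation bounds −log(1 − x + c(|x|)) ≤ φ(x) ≤ log(1 + x + c(|x|)) for all x ∈ ℝ only if c(|x|) ≥ √(1 + x²) − 1 for all x ∈ ℝ. Conversely, the condition c(|x|) ≥ √(1 + x²) − 1 implies −log(1 − x + c(|x|)) ≤ log(1 + x + c(|x|)) for all x. -/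
open Real

/-- A truncation function `φ` can satisfy the two-sided log-truncation bounds
`−log(1 − x + c(|x|)) ≤ φ(x) ≤ log(1 + x + c(|x|))` only if
`c(|x|) ≥ √(1 + x²) − 1`; conversely this condition implies the compatibility
inequality `−log(1 − x + c(|x|)) ≤ log(1 + x + c(|x|))`. -/
theorem log_truncation_condition (c : ℝ → ℝ) (hc : ∀ x : ℝ, 0 ≤ x → 0 < c x)
    (hpos : ∀ x : ℝ, 0 < 1 - x + c |x| ∧ 0 < 1 + x + c |x|) :
    ((∃ φ : ℝ → ℝ, ∀ x : ℝ,
        -Real.log (1 - x + c |x|) ≤ φ x ∧ φ x ≤ Real.log (1 + x + c |x|)) →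
      ∀ x : ℝ, Real.sqrt (1 + x ^ 2) - 1 ≤ c |x|) ∧
    ((∀ x : ℝ, Real.sqrt (1 + x ^ 2) - 1 ≤ c |x|) →
      ∀ x : ℝ, -Real.log (1 - x + c |x|) ≤ Real.log (1 + x + c |x|)) := by
  constructor
  · rintro ⟨φ, hφ⟩ x
    obtain ⟨h1, h2⟩ := hφ x
    obtain ⟨p1, p2⟩ := hpos x
    have hle : -Real.log (1 - x + c |x|) ≤ Real.log (1 + x + c |x|) := h1.trans h2
    have hsum : 0 ≤ Real.log ((1 - x + c |x|) * (1 + x + c |x|)) := by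
      rw [Real.log_mul p1.ne' p2.ne']; linarith
    have hprod : 1 ≤ (1 - x + c |x|) * (1 + x + c |x|) := by
      by_contra h
      push_neg at h
      have := Real.log_neg (mul_pos p1 p2) h
      linarith
    have hsq : 1 + x ^ 2 ≤ (1 + c |x|) ^ 2 := by nlinarith
    have h0 : 0 ≤ 1 + c |x| := by linarith [hc |x| (abs_nonneg x)]
    have := Real.sqrt_le_sqrt hsq
    rw [Real.sqrt_sq h0] at this
    linarith
  · intro h x
    obtain ⟨p1, p2⟩ := hpos x
    have hx := h x
    have hsq : Real.sqrt (1 + x ^ 2) ^ 2 = 1 + x ^ 2 :=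
      Real.sq_sqrt (by positivity)
    have hs : 0 ≤ Real.sqrt (1 + x ^ 2) := Real.sqrt_nonneg _
    have hprod : 1 ≤ (1 - x + c |x|) * (1 + x + c |x|) := by
      nlinarith [mul_le_mul hx hx (by nlinarith : (0:ℝ) ≤ Real.sqrt (1 + x ^ 2) - 1) (by linarith [hc |x| (abs_nonneg x)] : (0:ℝ) ≤ c |x|)]
    have := Real.log_nonneg hprod
    rw [Real.log_mul p1.ne' p2.ne'] at this
    linarith
end
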